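/- arXiv:0911.3355 — 2 statements merged into one kernel-verified Lean document; each statement's English description precedes it below -/
import Mathlib

section
/- Let j ≥ 1 and s ≥ 0 be integers, let w be a word of length n over an alphabet Σ, let f : Σ → Σ be an involution and φ the induced antimorphic involution on words. Then w contains a factor of the form φ(x) x^j for some nonempty word x with |x| > s if and only if there exists an index i with 1 ≤ i ≤ n such that mp_s^j(w[i..n]) ≤ cmp_w[i−1]. -/
open List

/-- `x^k`: concatenation of `k` copies of the word `x`. -/
def listPow {α : Type*} (x : List α) (k : ℕ) : List α := (List.replicate k x).flatten

/-- Minimal period `mp_s^k(u)` taking values in `ℕ∞`: the least `m > s` such that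
the prefix of `u` of length `k*m` is the `k`-th power of the prefix of length `m`;
`⊤` if no such `m` exists. -/
noncomputable def minPeriod {α : Type*} (k s : ℕ) (u : List α) : ℕ∞ :=
  sInf {N : ℕ∞ | ∃ m : ℕ, N = (m : ℕ∞) ∧ s < m ∧ k * m ≤ u.length ∧
    listPow (u.take m) k <+: u}

/-- Length of the longest common prefix of two words. -/
def lcpLen {α : Type*} [DecidableEq α] (a b : List α) : ℕ :=
  ((a.zip b).takeWhile fun p => decide (p.1 = p.2)).length

/-- The antimorphic involution on words induced by a letter map `f`. -/
def phi {α : Type*} (f : α → α) (u : List α) : List α := (u.map f).reverse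

/-- Centralized maximal pseudo-palindrome array entry `cmp_w[i]`. -/
noncomputable def cmpArr {α : Type*} (f : α → α) (w : List α) (i : ℕ) : ℕ :=
  sSup {m : ℕ | m ≤ min i (w.length - i) ∧
    phi f ((w.drop (i - m)).take m) = (w.drop i).take m}

lemma listPow_length {α : Type*} (x : List α) (k : ℕ) :
    (listPow x k).length = k * x.length := by
  simp [listPow, List.length_flatten, List.map_replicate, List.sum_replicate, smul_eq_mul]

lemma listPow_succ {α : Type*} (x : List α) (k : ℕ) :
    listPow x (k + 1) = x ++ listPow x k := by
  simp [listPow, List.replicate_succ]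

lemma phi_length {α : Type*} (f : α → α) (u : List α) : (phi f u).length = u.length := by
  simp [phi]

lemma phi_phi {α : Type*} {f : α → α} (hf : Function.Involutive f) (u : List α) :
    phi f (phi f u) = u := by
  simp [phi, List.map_reverse, List.map_map, hf.comp_self]

lemma phi_take {α : Type*} (f : α → α) (l : List α) (m : ℕ) :
    phi f (l.take m) = (phi f l).drop (l.length - m) := by
  simp [phi, List.map_take, List.reverse_take]

/-- `w` contains a factor `φ(x) x^j` with `x` nonempty and `|x| > s`
iff there exists `1 ≤ i ≤ n` with `mp_s^j(w[i..n]) ≤ cmp_w[i−1]`. -/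
theorem stmt10 {α : Type*} (j s : ℕ) (hj : 1 ≤ j) (f : α → α)
    (hf : Function.Involutive f) (w : List α) :
    (∃ x : List α, x ≠ [] ∧ s < x.length ∧ (phi f x ++ listPow x j) <:+: w) ↔
      (∃ i, 1 ≤ i ∧ i ≤ w.length ∧
        minPeriod j s (w.drop (i - 1)) ≤ (cmpArr f w (i - 1) : ℕ∞)) := by
  constructor
  · rintro ⟨x, hx, hsx, a, b, hab⟩
    obtain ⟨j', rfl⟩ : ∃ j', j = j' + 1 := ⟨j - 1, (Nat.succ_pred_eq_of_pos hj).symm⟩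
    have hxpos : 0 < x.length := List.length_pos_iff.mpr hx
    set p := a.length + x.length with hp
    have hwlen : w.length = a.length + (x.length + ((j' + 1) * x.length + b.length)) := by
      rw [← hab]; simp [phi_length, listPow_length]
    -- w with the blocks regrouped
    have hw2 : w = (a ++ phi f x) ++ (listPow x (j' + 1) ++ b) := by
      rw [← hab]; simp
    have hlen2 : (a ++ phi f x).length = p := by simp [phi_length, hp]
    have hdropp : w.drop p = listPow x (j' + 1) ++ b := by
      rw [hw2, ← hlen2, List.drop_left]
    have hdropa : w.drop a.length = phi f x ++ (listPow x (j' + 1) ++ b) := by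
      rw [← hab]; simp [List.drop_left]
    have htakex : (w.drop p).take x.length = x := by
      rw [hdropp, listPow_succ, List.append_assoc, List.take_left]
    have hmul : x.length ≤ (j' + 1) * x.length := Nat.le_mul_of_pos_left _ (Nat.succ_pos _)
    refine ⟨p + 1, le_add_self, ?_, ?_⟩
    · omega
    · simp only [Nat.add_sub_cancel]
      have hmp : minPeriod (j' + 1) s (w.drop p) ≤ (x.length : ℕ∞) := by
        apply sInf_le
        refine ⟨x.length, rfl, hsx, ?_, ?_⟩
        · rw [hdropp]; simp [listPow_length]
        · rw [htakex, hdropp]; exact List.prefix_append _ _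
      refine hmp.trans ?_
      rw [Nat.cast_le]
      -- x.length is in the cmp set
      apply le_csSup
      · exact ⟨min p (w.length - p), fun m hm => hm.1⟩
      · constructor
        · omega
        · have : p - x.length = a.length := by omega
          rw [this, hdropa, htakex]
          have : (phi f x ++ (listPow x (j' + 1) ++ b)).take x.length = phi f x := by
            rw [← phi_length f x, List.take_left]
          rw [this, phi_phi hf]
  · rintro ⟨i, hi1, hin, hle⟩
    set p := i - 1 with hpdef
    have hpn : p ≤ w.length - 1 := by omega
    set u := w.drop p with hu
    set c := cmpArr f w p with hc
    -- extract the minimal period witness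
    set S : Set ℕ := {m | s < m ∧ j * m ≤ u.length ∧ listPow (u.take m) j <+: u} with hS
    have hTS : {N : ℕ∞ | ∃ m : ℕ, N = (m : ℕ∞) ∧ s < m ∧ j * m ≤ u.length ∧
        listPow (u.take m) j <+: u} = (fun m : ℕ => (m : ℕ∞)) '' S := by
      ext N; simp only [Set.mem_setOf_eq, Set.mem_image, hS]
      constructor
      · rintro ⟨m, rfl, h1, h2, h3⟩; exact ⟨m, ⟨h1, h2, h3⟩, rfl⟩
      · rintro ⟨m, ⟨h1, h2, h3⟩, rfl⟩; exact ⟨m, rfl, h1, h2, h3⟩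
    have hSne : S.Nonempty := by
      by_contra hemp
      rw [Set.not_nonempty_iff_eq_empty] at hemp
      rw [minPeriod, hTS, hemp, Set.image_empty, sInf_empty, top_le_iff] at hle
      exact WithTop.coe_ne_top hle
    set m := sInf S with hm
    have hmS : m ∈ S := Nat.sInf_mem hSne
    have hmc : m ≤ c := by
      have h1 : (m : ℕ∞) ≤ minPeriod j s u := by
        rw [minPeriod, hTS]
        apply le_sInf
        rintro N ⟨m', hm', rfl⟩
        exact Nat.cast_le.mpr (Nat.sInf_le hm')
      exact_mod_cast h1.trans hle
    obtain ⟨hsm, hjm, hpref⟩ := hmS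
    -- c is in the cmp set
    have hcmem : c ≤ min p (w.length - p) ∧
        phi f ((w.drop (p - c)).take c) = (w.drop p).take c := by
      have := Nat.sSup_mem (s := {m | m ≤ min p (w.length - p) ∧
          phi f ((w.drop (p - m)).take m) = (w.drop p).take m})
        ⟨0, by simp [phi]⟩ ⟨min p (w.length - p), fun m hm => hm.1⟩
      exact this
    obtain ⟨hcmin, hceq⟩ := hcmem
    have hcp : c ≤ p := le_trans hcmin (min_le_left _ _)
    have hcn : c ≤ u.length := by
      rw [hu, List.length_drop]; exact le_trans hcmin (min_le_right _ _)
    have hmu : m ≤ u.length := le_trans (by nlinarith) hjm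
    set x := u.take m with hx
    have hxlen : x.length = m := by rw [hx, List.length_take]; omega
    -- phi f x = (w.drop (p - m)).take m
    have hzy : (w.drop (p - c)).take c = phi f ((w.drop p).take c) := by
      rw [← hceq, phi_phi hf]
    have hphix : phi f x = (w.drop (p - m)).take m := by
      have hxc : x = ((w.drop p).take c).take m := by
        rw [hx, hu, List.take_take, min_eq_left hmc]
      have hlenz : ((w.drop p).take c).length = c := by
        rw [List.length_take]; rw [hu] at hcn; omega
      rw [hxc, phi_take, hlenz, ← hzy, List.drop_take]
      have h1 : c - (c - m) = m := by omega
      have h2 : ((w.drop (p - c)).drop (c - m)) = w.drop (p - m) := by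
        rw [List.drop_drop]
        congr 1
        omega
      rw [h1, h2]
    obtain ⟨r, hr⟩ := hpref
    refine ⟨x, ?_, ?_, w.take (p - m), r, ?_⟩
    · rw [← List.length_pos_iff, hxlen]; omega
    · rw [hxlen]; exact hsm
    · have hmp : m ≤ p := le_trans hmc hcp
      have hkey : w.drop (p - m) = phi f x ++ (listPow x j ++ r) := by
        conv_lhs => rw [← List.take_append_drop m (w.drop (p - m))]
        rw [← hphix, List.drop_drop]
        have hppm : p - m + m = p := by omega
        rw [hppm, ← hu, hr]
      calc w.take (p - m) ++ (phi f x ++ listPow x j) ++ r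
          = w.take (p - m) ++ (phi f x ++ (listPow x j ++ r)) := by simp
        _ = w.take (p - m) ++ w.drop (p - m) := by rw [hkey]
        _ = w := List.take_append_drop _ _
end

section
/- Let k ≥ 2 be an integer, let w be a word of length n over an alphabet Σ, let f : Σ → Σ be an involution and φ the induced antimorphic involution on words. Let i, p be positive integers with i + kp − 1 ≤ n and set x = w[i..i+p−1]. Then w[i..i+kp−1] equals the concatenation b_1 b_2 ⋯ b_k, where b_j = x for odd j and b_j = φ(x) for even j, if and only if cmp_w[i + jp − 1] ≥ p for every j with 1 ≤ j ≤ k−1. -/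
/-! Cut `w[i..i+kp−1]` into `k` blocks of length `p`. Since `φ` is an involution, the alternating
pattern `x, φ(x), x, …` is the orbit of `x = block 0` under `φ`, so the left-hand side says that
each block is the `φ`-image of the previous one. On the other hand, the radii `m` admissible in
the definition of `cmp_w[c]` form a downward closed set, so `cmp_w[c] ≥ p` at the boundary
`c = i + jp − 1` between blocks `j` and `j + 1` says exactly that block `j + 1` is `φ` of block `j`. -/

open List

theorem Function.Involutive.iterate_eq_ite {β : Type*} {g : β → β} (hg : Function.Involutive g)
    (j : ℕ) (x : β) : g^[j] x = if j % 2 = 0 then x else g x := by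
  split_ifs with h
  · rw [hg.iterate_even (Nat.even_iff.mpr h), id]
  · rw [hg.iterate_odd (Nat.odd_iff.mpr (by omega))]

theorem forall_lt_eq_iterate_iff {β : Type*} (g : β → β) (b : ℕ → β) (k : ℕ) :
    (∀ j < k, b j = g^[j] (b 0)) ↔ ∀ j, j + 1 < k → b (j + 1) = g (b j) := by
  constructor
  · intro h j hj
    rw [h (j + 1) hj, h j (by omega), Function.iterate_succ_apply']
  · intro h j hj
    induction j with
    | zero => rfl
    | succ j ih => rw [h j hj, ih (by omega), Function.iterate_succ_apply']

section Words

variable {α : Type*}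

theorem phi_involutive {f : α → α} (hf : Function.Involutive f) :
    Function.Involutive (phi f) := fun u => by
  simp [phi, List.map_reverse, hf.comp_self]

@[simp]
theorem length_phi (f : α → α) (u : List α) : (phi f u).length = u.length := by
  simp [phi]

@[simp]
theorem length_iterate_phi (f : α → α) (j : ℕ) (u : List α) :
    ((phi f)^[j] u).length = u.length := by
  induction j with
  | zero => rfl
  | succ j ih => rw [Function.iterate_succ_apply', length_phi, ih]

theorem take_phi (f : α → α) (u : List α) (m : ℕ) :
    (phi f u).take m = phi f (u.drop (u.length - m)) := by
  simp [phi, List.take_reverse, List.map_drop]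

theorem List.take_mul_eq_flatten_iff {L : List α} {g : ℕ → List α} {p : ℕ} :
    ∀ {k}, k * p ≤ L.length → (∀ j < k, (g j).length = p) →
      (L.take (k * p) = ((List.range k).map g).flatten ↔
        ∀ j < k, (L.drop (j * p)).take p = g j)
  | 0, _, _ => by simp
  | k + 1, hL, hg => by
    have hL' : k * p ≤ L.length := le_trans (Nat.mul_le_mul_right p k.le_succ) hL
    have hlen : (L.take (k * p)).length = (((List.range k).map g).flatten).length := by
      have : ((List.range k).map g).map List.length = List.replicate k p :=
        List.eq_replicate_iff.mpr ⟨by simp, by grind⟩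
      rw [List.length_take, min_eq_left hL', List.length_flatten, this, List.sum_replicate,
        smul_eq_mul]
    rw [List.range_succ, List.map_append, List.flatten_append, Nat.succ_mul, List.take_add,
      List.map_singleton, List.flatten_singleton, Nat.forall_lt_succ_right]
    constructor
    · intro h
      obtain ⟨hinit, hlast⟩ := List.append_inj h hlen
      exact ⟨(take_mul_eq_flatten_iff hL' fun j hj => hg j (by omega)).mp hinit, hlast⟩
    · rintro ⟨hinit, hlast⟩
      rw [(take_mul_eq_flatten_iff hL' fun j hj => hg j (by omega)).mpr hinit, hlast]

theorem phi_take_drop_of_le (f : α → α) {w : List α} {c m m' : ℕ} (hm' : m' ≤ m) (hmc : m ≤ c)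
    (hcw : c ≤ w.length) (h : phi f ((w.drop (c - m)).take m) = (w.drop c).take m) :
    phi f ((w.drop (c - m')).take m') = (w.drop c).take m' := by
  have h' := congrArg (List.take m') h
  rwa [List.take_take, min_eq_left hm', take_phi, List.drop_take, List.drop_drop,
    List.length_take, List.length_drop, min_eq_left (by omega : m ≤ w.length - (c - m)),
    Nat.sub_sub_self hm', (by omega : c - m + (m - m') = c - m')] at h'

theorem le_cmpArr_iff (f : α → α) {w : List α} {c p : ℕ} (hpc : p ≤ c)
    (hcp : c + p ≤ w.length) :
    p ≤ cmpArr f w c ↔ phi f ((w.drop (c - p)).take p) = (w.drop c).take p := by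
  have hbdd : BddAbove {m : ℕ | m ≤ min c (w.length - c) ∧
      phi f ((w.drop (c - m)).take m) = (w.drop c).take m} :=
    ⟨_, fun m hm => hm.1⟩
  constructor
  · intro hp
    obtain ⟨hle, hmax⟩ := Nat.sSup_mem ⟨0, by simp [phi]⟩ hbdd
    exact phi_take_drop_of_le f hp (hle.trans (min_le_left _ _)) (by omega) hmax
  · intro h
    exact le_csSup hbdd ⟨by omega, h⟩

theorem le_cmpArr_iff_phi_block (f : α → α) {w : List α} {s p j : ℕ}
    (hw : s + (j + 2) * p ≤ w.length) :
    p ≤ cmpArr f w (s + (j + 1) * p) ↔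
      phi f (((w.drop s).drop (j * p)).take p) = ((w.drop s).drop ((j + 1) * p)).take p := by
  rw [le_cmpArr_iff f (by nlinarith) (by nlinarith), List.drop_drop, List.drop_drop,
    (by ring_nf; omega : s + (j + 1) * p - p = s + j * p)]

end Words

theorem stmt11_general {α : Type*} (k : ℕ) (f : α → α)
    (hf : Function.Involutive f) (w : List α) (i p : ℕ) (hi : 1 ≤ i)
    (hle : i + k * p - 1 ≤ w.length) :
    ((w.drop (i - 1)).take (k * p) =
      ((List.range k).map fun j =>
        if j % 2 = 0 then (w.drop (i - 1)).take p
        else phi f ((w.drop (i - 1)).take p)).flatten) ↔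
      (∀ j, 1 ≤ j → j ≤ k - 1 → p ≤ cmpArr f w (i + j * p - 1)) := by
  set L := w.drop (i - 1) with hL
  have hkp : k * p ≤ L.length := by rw [hL, List.length_drop]; omega
  have hlen : ∀ j < k, ((phi f)^[j] (L.take p)).length = p := fun j hj => by
    have : p ≤ k * p := Nat.le_mul_of_pos_left p (by omega)
    rw [length_iterate_phi, List.length_take]; omega
  have horbit : (fun j => if j % 2 = 0 then L.take p else phi f (L.take p)) =
      fun j => (phi f)^[j] (L.take p) :=
    funext fun j => ((phi_involutive hf).iterate_eq_ite j _).symm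
  have hsucc := forall_lt_eq_iterate_iff (phi f) (fun j => (L.drop (j * p)).take p) k
  simp only [zero_mul, List.drop_zero] at hsucc
  have hcmp : ∀ j, j + 1 < k → (p ≤ cmpArr f w (i + (j + 1) * p - 1) ↔
      phi f ((L.drop (j * p)).take p) = (L.drop ((j + 1) * p)).take p) := fun j hj => by
    have := Nat.mul_le_mul_right p (by omega : j + 2 ≤ k)
    rw [show i + (j + 1) * p - 1 = i - 1 + (j + 1) * p by omega]
    exact le_cmpArr_iff_phi_block f (by rw [hL, List.length_drop] at hkp; omega)
  rw [horbit, List.take_mul_eq_flatten_iff hkp hlen, hsucc]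
  constructor
  · intro h j hj1 hjk
    obtain ⟨j, rfl⟩ := Nat.exists_eq_add_of_le' hj1
    exact (hcmp j (by omega)).mpr (h j (by omega)).symm
  · intro h j hj
    exact ((hcmp j hj).mp (h (j + 1) (by omega) (by omega))).symm

/-- `w[i..i+kp−1] = b_1 b_2 ⋯ b_k` with `b_j = x` for odd `j` and
`b_j = φ(x)` for even `j` (where `x = w[i..i+p−1]`), iff `cmp_w[i+jp−1] ≥ p` for
all `1 ≤ j ≤ k−1`. -/
theorem stmt11 {α : Type*} (k : ℕ) (hk : 2 ≤ k) (f : α → α)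
    (hf : Function.Involutive f) (w : List α) (i p : ℕ) (hi : 1 ≤ i) (hp : 1 ≤ p)
    (hle : i + k * p - 1 ≤ w.length) :
    ((w.drop (i - 1)).take (k * p) =
      ((List.range k).map fun j =>
        if j % 2 = 0 then (w.drop (i - 1)).take p
        else phi f ((w.drop (i - 1)).take p)).flatten) ↔
      (∀ j, 1 ≤ j → j ≤ k - 1 → p ≤ cmpArr f w (i + j * p - 1)) :=
  stmt11_general k f hf w i p hi hle
end
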